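/- arXiv:1307.1925 — 2 statements merged into one kernel-verified Lean document; each statement's English description precedes it below -/
import Mathlib

section
/- Let f : ℝ³×ℝ³ → [0,∞) be measurable and essentially bounded, let b > 0, and set ρ(x) = ∫_{ℝ³} f(x,v) dv. Then there exists a constant C depending only on b such that ‖ρ‖_{L^{(b+3)/3}(ℝ³)} ≤ C ‖f‖_{L∞}^{b/(3+b)} ( ∬_{ℝ³×ℝ³} |v|^b f(x,v) dx dv )^{3/(3+b)}. -/
/-!
For fixed `x`, split the velocity integral of `f x ·` at a radius `R`: the ball `‖v‖ < R`
contributes at most `‖f‖_∞ |B₁| R³`, its complement at most `R⁻ᵇ m(x)` with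
`m(x) = ∫ ‖v‖ᵇ f x v dv`. The choice `R^(b+3) = m(x) / ‖f‖_∞` balances the two and gives
`ρ(x) ≤ (|B₁| + 1) ‖f‖_∞^(b/(b+3)) m(x)^(3/(b+3))`. The `(b+3)/3`-th power of the right-hand
side is linear in `m(x)`, so integrating in `x` gives the estimate with `C = |B₁| + 1`.
-/

open MeasureTheory Set Filter
open scoped ENNReal

noncomputable section

abbrev E3 : Type := EuclideanSpace ℝ (Fin 3)

open Metric Module

lemma exists_radius_balance {M m : ℝ≥0∞} (hM0 : M ≠ 0) (hMt : M ≠ ∞) (hm0 : m ≠ 0)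
    (hmt : m ≠ ∞) {b d : ℝ} (hb : 0 < b) (hd : 0 < d) :
    ∃ R : ℝ, 0 < R ∧ M * ENNReal.ofReal R ^ d = M ^ (b / (b + d)) * m ^ (d / (b + d)) ∧
      m / ENNReal.ofReal R ^ b = M ^ (b / (b + d)) * m ^ (d / (b + d)) := by
  have hbd : 0 < b + d := by linarith
  set u := m / M
  have hu0 : u ≠ 0 := ENNReal.div_ne_zero.mpr ⟨hm0, hMt⟩
  have hut : u ≠ ∞ := ENNReal.div_ne_top hmt hM0
  have hm : m = M * u := (ENNReal.mul_div_cancel hM0 hMt).symm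
  -- `R ^ (b + d) = m / M`
  set r := u ^ (1 / (b + d))
  have hr0 : r ≠ 0 := (ENNReal.rpow_pos hu0.bot_lt hut).ne'
  have hrt : r ≠ ∞ := ENNReal.rpow_ne_top_of_nonneg (by positivity) hut
  have hpow (t : ℝ) : r ^ t = u ^ (t / (b + d)) := by
    rw [← ENNReal.rpow_mul]; congr 1; ring
  have hrhs : M ^ (b / (b + d)) * m ^ (d / (b + d)) = M * u ^ (d / (b + d)) := by
    rw [hm, ENNReal.mul_rpow_of_nonneg _ _ (by positivity), ← mul_assoc,
      ← ENNReal.rpow_add _ _ hM0 hMt, ← add_div, div_self hbd.ne', ENNReal.rpow_one]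
  refine ⟨r.toReal, ENNReal.toReal_pos hr0 hrt, ?_, ?_⟩ <;>
    rw [ENNReal.ofReal_toReal hrt, hrhs]
  · rw [hpow]
  · have hexp : d / (b + d) = -b / (b + d) + 1 := by field_simp; ring
    rw [ENNReal.div_eq_inv_mul, ← ENNReal.rpow_neg, hpow, hm, mul_left_comm, hexp,
      ENNReal.rpow_add _ _ hu0 hut, ENNReal.rpow_one]

lemma rpow_mul_setLIntegral_compl_ball_le {E : Type*} [SeminormedAddCommGroup E]
    [MeasurableSpace E] [OpensMeasurableSpace E] (μ : Measure E) (g : E → ℝ≥0∞) {b : ℝ}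
    (hb : 0 ≤ b) (R : ℝ) :
    ENNReal.ofReal R ^ b * ∫⁻ v in (ball 0 R)ᶜ, g v ∂μ ≤ ∫⁻ v, ‖v‖ₑ ^ b * g v ∂μ := by
  calc ENNReal.ofReal R ^ b * ∫⁻ v in (ball 0 R)ᶜ, g v ∂μ
      ≤ ∫⁻ v in (ball 0 R)ᶜ, ENNReal.ofReal R ^ b * g v ∂μ := lintegral_const_mul_le _ _
    _ ≤ ∫⁻ v in (ball 0 R)ᶜ, ‖v‖ₑ ^ b * g v ∂μ := by
      refine setLIntegral_mono' measurableSet_ball.compl fun v hv => ?_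
      have hRv : ENNReal.ofReal R ≤ ‖v‖ₑ := by
        rw [← ofReal_norm]
        exact ENNReal.ofReal_le_ofReal (by simpa using hv)
      gcongr
    _ ≤ ∫⁻ v, ‖v‖ₑ ^ b * g v ∂μ := setLIntegral_le_lintegral _ _

lemma ae_ae_enorm_le_eLpNorm_top {α β F : Type*} [MeasurableSpace α] [MeasurableSpace β]
    {μ : Measure α} {ν : Measure β} [SFinite ν] [ENorm F] (f : α × β → F) :
    ∀ᵐ x ∂μ, ∀ᵐ y ∂ν, ‖f (x, y)‖ₑ ≤ eLpNorm f ∞ (μ.prod ν) := by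
  rw [eLpNorm_exponent_top]
  exact Measure.ae_ae_of_ae_prod ae_le_eLpNormEssSup

section AddHaar

variable {E : Type*} [NormedAddCommGroup E] [NormedSpace ℝ E] [FiniteDimensional ℝ E]
  [Nontrivial E] [MeasurableSpace E] [BorelSpace E] (μ : Measure E) [μ.IsAddHaarMeasure]

lemma setLIntegral_ball_le_of_ae_le {g : E → ℝ≥0∞} {M : ℝ≥0∞} (hg : ∀ᵐ v ∂μ, g v ≤ M)
    {R : ℝ} (hR : 0 ≤ R) :
    ∫⁻ v in ball 0 R, g v ∂μ ≤ M * ENNReal.ofReal R ^ (finrank ℝ E : ℝ) * μ (ball 0 1) := by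
  calc ∫⁻ v in ball 0 R, g v ∂μ ≤ ∫⁻ _ in ball 0 R, M ∂μ :=
        lintegral_mono_ae (ae_restrict_of_ae hg)
    _ = M * ENNReal.ofReal R ^ (finrank ℝ E : ℝ) * μ (ball 0 1) := by
      rw [setLIntegral_const, Measure.addHaar_ball _ _ hR, ENNReal.ofReal_pow hR,
        ENNReal.rpow_natCast, mul_assoc]

lemma ae_eq_zero_of_lintegral_enorm_rpow_mul_eq_zero {g : E → ℝ≥0∞} (hg : AEMeasurable g μ)
    {b : ℝ} (h : ∫⁻ v, ‖v‖ₑ ^ b * g v ∂μ = 0) : g =ᵐ[μ] 0 := by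
  have hmul := (lintegral_eq_zero_iff' (by fun_prop)).mp h
  filter_upwards [hmul, Measure.ae_ne μ 0] with v hv hv0
  refine (mul_eq_zero.mp hv).resolve_left ?_
  simp [ENNReal.rpow_eq_zero_iff, hv0]

theorem lintegral_le_of_ae_le_of_moment {g : E → ℝ≥0∞} (hg : AEMeasurable g μ) {M : ℝ≥0∞}
    (hgM : ∀ᵐ v ∂μ, g v ≤ M) {b : ℝ} (hb : 0 < b) :
    ∫⁻ v, g v ∂μ ≤ (μ (ball 0 1) + 1) * M ^ (b / (b + finrank ℝ E)) *
      (∫⁻ v, ‖v‖ₑ ^ b * g v ∂μ) ^ ((finrank ℝ E : ℝ) / (b + finrank ℝ E)) := by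
  set d : ℝ := (finrank ℝ E : ℝ)
  set m := ∫⁻ v, ‖v‖ₑ ^ b * g v ∂μ
  have hd : 0 < d := Nat.cast_pos.mpr finrank_pos
  by_cases hzero : M = 0 ∨ m = 0
  · have hg0 : g =ᵐ[μ] 0 := by
      rcases hzero with rfl | hm
      · filter_upwards [hgM] with v hv using le_zero_iff.mp hv
      · exact ae_eq_zero_of_lintegral_enorm_rpow_mul_eq_zero μ hg hm
    simp [lintegral_congr_ae hg0]
  obtain ⟨hM0, hm0⟩ := not_or.mp hzero
  by_cases htop : M = ∞ ∨ m = ∞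
  · have hM : M ^ (b / (b + d)) ≠ 0 :=
      (ENNReal.rpow_pos_of_nonneg (pos_iff_ne_zero.2 hM0) (by positivity)).ne'
    have hm : m ^ (d / (b + d)) ≠ 0 :=
      (ENNReal.rpow_pos_of_nonneg (pos_iff_ne_zero.2 hm0) (by positivity)).ne'
    rcases htop with h | h <;> rw [h, ENNReal.top_rpow_of_pos (by positivity)] <;>
      simp [ENNReal.mul_top, ENNReal.top_mul, hM, hm]
  obtain ⟨hMt, hmt⟩ := not_or.mp htop
  obtain ⟨R, hR, hball, htail⟩ := exists_radius_balance hM0 hMt hm0 hmt hb hd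
  have hR' : ENNReal.ofReal R ^ b ≠ 0 :=
    (ENNReal.rpow_pos (ENNReal.ofReal_pos.mpr hR) ENNReal.ofReal_ne_top).ne'
  calc ∫⁻ v, g v ∂μ = ∫⁻ v in ball 0 R, g v ∂μ + ∫⁻ v in (ball 0 R)ᶜ, g v ∂μ :=
        (lintegral_add_compl _ measurableSet_ball).symm
    _ ≤ M * ENNReal.ofReal R ^ d * μ (ball 0 1) + m / ENNReal.ofReal R ^ b := by
      gcongr
      · exact setLIntegral_ball_le_of_ae_le μ hgM hR.le
      · rw [ENNReal.le_div_iff_mul_le (.inl hR') (.inr hmt), mul_comm]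
        exact rpow_mul_setLIntegral_compl_ball_le μ g hb.le R
    _ = (μ (ball 0 1) + 1) * M ^ (b / (b + d)) * m ^ (d / (b + d)) := by
      rw [hball, htail]; ring

lemma ae_enorm_integral_le_of_moment {α G : Type*} [MeasurableSpace α] (ν : Measure α)
    [NormedAddCommGroup G] [NormedSpace ℝ G] {f : α → E → G}
    (hf : AEStronglyMeasurable (fun p : α × E => f p.1 p.2) (ν.prod μ)) {b : ℝ} (hb : 0 < b) :
    ∀ᵐ x ∂ν, ‖∫ v, f x v ∂μ‖ₑ ≤ (μ (ball 0 1) + 1) *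
      eLpNorm (fun p : α × E => f p.1 p.2) ∞ (ν.prod μ) ^ (b / (b + finrank ℝ E)) *
      (∫⁻ v, ‖v‖ₑ ^ b * ‖f x v‖ₑ ∂μ) ^ ((finrank ℝ E : ℝ) / (b + finrank ℝ E)) := by
  filter_upwards [hf.prodMk_left, ae_ae_enorm_le_eLpNorm_top (ν := μ) (fun p : α × E => f p.1 p.2)]
    with x hfx hx
  exact (enorm_integral_le_lintegral_enorm _).trans
    (lintegral_le_of_ae_le_of_moment μ hfx.enorm hx hb)

end AddHaar

lemma eLpNorm_le_of_ae_enorm_le_mul_rpow {α F : Type*} [MeasurableSpace α] {μ : Measure α}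
    [ENorm F] {p : ℝ≥0∞} (hp0 : p ≠ 0) (hpt : p ≠ ∞) {ρ : α → F} {h : α → ℝ≥0∞} {K : ℝ≥0∞}
    (hK : K ≠ ∞) (hρ : ∀ᵐ x ∂μ, ‖ρ x‖ₑ ≤ K * h x ^ p.toReal⁻¹) :
    eLpNorm ρ p μ ≤ K * (∫⁻ x, h x ∂μ) ^ p.toReal⁻¹ := by
  have hp : 0 < p.toReal := ENNReal.toReal_pos hp0 hpt
  rw [eLpNorm_eq_lintegral_rpow_enorm_toReal hp0 hpt, one_div]
  calc (∫⁻ x, ‖ρ x‖ₑ ^ p.toReal ∂μ) ^ p.toReal⁻¹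
      ≤ (∫⁻ x, (K * h x ^ p.toReal⁻¹) ^ p.toReal ∂μ) ^ p.toReal⁻¹ := by
        gcongr ?_ ^ _
        exact lintegral_mono_ae (hρ.mono fun x hx => by gcongr)
    _ = (K ^ p.toReal * ∫⁻ x, h x ∂μ) ^ p.toReal⁻¹ := by
        rw [← lintegral_const_mul' _ _ (ENNReal.rpow_ne_top_of_nonneg hp.le hK)]
        simp_rw [ENNReal.mul_rpow_of_nonneg _ _ hp.le, ← ENNReal.rpow_mul,
          inv_mul_cancel₀ hp.ne', ENNReal.rpow_one]
    _ = K * (∫⁻ x, h x ∂μ) ^ p.toReal⁻¹ := by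
        rw [ENNReal.mul_rpow_of_nonneg _ _ (by positivity), ← ENNReal.rpow_mul,
          mul_inv_cancel₀ hp.ne', ENNReal.rpow_one]

/-- Interpolation estimate for the spatial density. -/
theorem statement_3 (b : ℝ) (hb : 0 < b) :
    ∃ C : ℝ, 0 < C ∧
      ∀ f : E3 → E3 → ℝ,
        Measurable (fun p : E3 × E3 => f p.1 p.2) →
        (∀ x v, 0 ≤ f x v) →
        eLpNorm (fun p : E3 × E3 => f p.1 p.2) ⊤ volume < ⊤ →
        eLpNorm (fun x : E3 => ∫ v : E3, f x v) (ENNReal.ofReal ((b + 3) / 3)) volume ≤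
          ENNReal.ofReal C
            * eLpNorm (fun p : E3 × E3 => f p.1 p.2) ⊤ volume ^ (b / (3 + b))
            * (∫⁻ p : E3 × E3, ENNReal.ofReal (‖p.2‖ ^ b * f p.1 p.2)) ^ (3 / (3 + b)) := by
  set c := volume (ball (0 : E3) 1)
  refine ⟨(c + 1).toReal, ENNReal.toReal_pos (by simp) (by finiteness), fun f hf hf0 hM => ?_⟩
  have hd : (finrank ℝ E3 : ℝ) = 3 := by simp
  have hp : (ENNReal.ofReal ((b + 3) / 3)).toReal⁻¹ = 3 / (b + 3) := by
    rw [ENNReal.toReal_ofReal (by positivity), inv_div]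
  have hslice := ae_enorm_integral_le_of_moment volume volume hf.aestronglyMeasurable hb
  rw [← Measure.volume_eq_prod, hd, ← hp] at hslice
  have hmoment : ∫⁻ p : E3 × E3, ENNReal.ofReal (‖p.2‖ ^ b * f p.1 p.2) =
      ∫⁻ x, ∫⁻ v, ‖v‖ₑ ^ b * ‖f x v‖ₑ := by
    rw [Measure.volume_eq_prod, lintegral_prod _ (by fun_prop)]
    refine lintegral_congr fun x => lintegral_congr fun v => ?_
    rw [ENNReal.ofReal_mul (by positivity), ← ENNReal.ofReal_rpow_of_nonneg (norm_nonneg _) hb.le,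
      ofReal_norm, Real.enorm_eq_ofReal (hf0 x v)]
  rw [ENNReal.ofReal_toReal (by finiteness), add_comm 3 b, hmoment, ← hp]
  exact eLpNorm_le_of_ae_enorm_le_mul_rpow (ENNReal.ofReal_pos.mpr (by positivity)).ne'
    ENNReal.ofReal_ne_top (by finiteness) hslice

end
end

section
/- Let (f,ξ) be a classical solution of the Vlasov–Poisson system with point charge on [0,T], and let (𝐱(t),𝐯(t)) = (𝐱(t,x,v),𝐯(t,x,v)) be any plasma trajectory, i.e. a solution of d𝐱/dt = 𝐯, d𝐯/dt = E(t,𝐱) + (𝐱−ξ(t))/|𝐱−ξ(t)|³ with 𝐱(t) ≠ ξ(t) for all t. Then for all t ∈ [0,T], (d/dt) √(h(t,𝐱(t),𝐯(t))) ≤ |E(t,𝐱(t))| + |E(t,ξ(t))|. -/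
open MeasureTheory Set Filter
open scoped ENNReal

noncomputable section

/-- Spatial density `ρ(t,x) = ∫ f(t,x,v) dv`. -/
def rho (f : ℝ → E3 → E3 → ℝ) (t : ℝ) (x : E3) : ℝ := ∫ v : E3, f t x v

/-- Self-induced electric field `E(t,x) = ∫ (x-y)/|x-y|³ ρ(t,y) dy`. -/
def Efield (f : ℝ → E3 → E3 → ℝ) (t : ℝ) (x : E3) : E3 :=
  ∫ y : E3, (rho f t y / ‖x - y‖ ^ 3) • (x - y)

/-- Singular field generated by the point charge located at `ξ t`:
`F(t,x) = (x-ξ(t))/|x-ξ(t)|³`. -/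
def Fpt (ξ : ℝ → E3) (t : ℝ) (x : E3) : E3 := (‖x - ξ t‖ ^ 3)⁻¹ • (x - ξ t)

/-- Total mass `M(t) = ∬ f(t,x,v) dx dv`. -/
def mass (f : ℝ → E3 → E3 → ℝ) (t : ℝ) : ℝ := ∫ p : E3 × E3, f t p.1 p.2

/-- Total energy `𝓗(t)`. -/
def energy (f : ℝ → E3 → E3 → ℝ) (ξ η : ℝ → E3) (t : ℝ) : ℝ :=
    (1 / 2) * ∫ p : E3 × E3, ‖p.2‖ ^ 2 * f t p.1 p.2
  + (1 / 2) * ‖η t‖ ^ 2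
  + (1 / 2) * ∫ x : E3, ∫ y : E3, rho f t x * rho f t y / ‖x - y‖
  + ∫ x : E3, rho f t x / ‖x - ξ t‖

/-- `L^∞` norm of the initial datum `‖f₀‖_{L^∞}`. -/
def supf0 (f : ℝ → E3 → E3 → ℝ) : ℝ :=
  (eLpNorm (fun p : E3 × E3 => f 0 p.1 p.2) ⊤ volume).toReal

/-- A classical solution of the Vlasov–Poisson system with point charge on `[0,T]`:
`f` is a nonnegative `C¹` compactly supported density whose initial datum vanishes
in a neighborhood of the charge `ξ 0`, `ξ ∈ C²` with `ξ' = η`, `η' = E(t,ξ(t))`,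
and the Vlasov equation holds pointwise (away from the charge). -/
structure VPClassicalSolution (T : ℝ) where
  f : ℝ → E3 → E3 → ℝ
  ξ : ℝ → E3
  η : ℝ → E3
  T_pos : 0 < T
  f_nonneg : ∀ t x v, 0 ≤ f t x v
  f_c1 : ContDiff ℝ 1 (fun p : ℝ × E3 × E3 => f p.1 p.2.1 p.2.2)
  f_cpt : HasCompactSupport (fun p : ℝ × E3 × E3 => f p.1 p.2.1 p.2.2)
  f0_vanishes_near_charge : ∃ ε > 0, ∀ x v, ‖x - ξ 0‖ < ε → f 0 x v = 0
  ξ_c2 : ContDiff ℝ 2 ξ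
  ξ_ode : ∀ t, HasDerivAt ξ (η t) t
  η_ode : ∀ t ∈ Icc (0 : ℝ) T, HasDerivAt η (Efield f t (ξ t)) t
  vlasov : ∀ t ∈ Icc (0 : ℝ) T, ∀ x v, x ≠ ξ t →
      deriv (fun τ : ℝ => f τ x v) t
      + fderiv ℝ (fun y : E3 => f t y v) x v
      + fderiv ℝ (fun w : E3 => f t x w) v (Efield f t x + Fpt ξ t x) = 0

/-- The microscopic energy function
`h(t,x,v) = |v-η(t)|²/2 + 1/|x-ξ(t)| + 𝓗(0) + M₀⁻¹ + 1`. -/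
def hEnergy (f : ℝ → E3 → E3 → ℝ) (ξ η : ℝ → E3) (t : ℝ) (x v : E3) : ℝ :=
  ‖v - η t‖ ^ 2 / 2 + ‖x - ξ t‖⁻¹ + energy f ξ η 0 + (mass f 0)⁻¹ + 1

/-- The energy moment `H̃_k(t) = ∬ h(t,x,v)^{k/2} f(t,x,v) dx dv`. -/
def Htilde (f : ℝ → E3 → E3 → ℝ) (ξ η : ℝ → E3) (k t : ℝ) : ℝ :=
  ∫ p : E3 × E3, hEnergy f ξ η t p.1 p.2 ^ (k / 2) * f t p.1 p.2

/-- The running supremum of the energy moments `H_k(t) = sup_{0≤s≤t} H̃_k(s)`. -/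
def Hmom (f : ℝ → E3 → E3 → ℝ) (ξ η : ℝ → E3) (k t : ℝ) : ℝ :=
  sSup (Htilde f ξ η k '' Icc 0 t)

/-!
Write `u = x - ξ` and `w = v - η` for the position and velocity relative to the point charge.
Along a plasma trajectory, `d/dt (|w|²/2) = ⟨w, E(t,x) + F(t,x) - E(t,ξ)⟩` while
`d/dt |u|⁻¹ = -⟨w, F(t,x)⟩`, so the singular force drops out and
`dh/dt = ⟨w, E(t,x) - E(t,ξ)⟩ ≤ |w| (|E(t,x)| + |E(t,ξ)|)`. Since `|w|² ≤ 2h`, dividing by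
`2√h` gives the bound on `d√h/dt`.
-/

open scoped RealInnerProductSpace

theorem HasDerivAt.inv_norm {F : Type*} [NormedAddCommGroup F] [InnerProductSpace ℝ F]
    {u : ℝ → F} {u' : F} {t : ℝ} (hu : HasDerivAt u u' t) (h0 : u t ≠ 0) :
    HasDerivAt (fun τ => ‖u τ‖⁻¹) (-⟪u', (‖u t‖ ^ 3)⁻¹ • u t⟫) t := by
  have hpos : 0 < ‖u t‖ := norm_pos_iff.mpr h0
  have hnorm : HasDerivAt (fun τ => ‖u τ‖) (⟪u t, u'⟫ / ‖u t‖) t := by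
    have h := hu.norm_sq.sqrt (by positivity)
    simp only [Real.sqrt_sq (norm_nonneg _)] at h
    convert h using 1
    field_simp
  refine (hnorm.inv hpos.ne').congr_deriv ?_
  rw [real_inner_smul_right, real_inner_comm]
  field_simp

theorem energy_nonneg {f : ℝ → E3 → E3 → ℝ} (hf : ∀ t x v, 0 ≤ f t x v) (ξ η : ℝ → E3)
    (t : ℝ) : 0 ≤ energy f ξ η t := by
  have hρ : ∀ t x, 0 ≤ rho f t x := fun t x => integral_nonneg fun v => hf t x v
  unfold energy
  -- the binders of the integrals in `energy` reach to the end of its definition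
  refine mul_nonneg (by norm_num) (integral_nonneg fun p => ?_)
  have hpot : 0 ≤ ∫ x : E3, ∫ y : E3, rho f t x * rho f t y / ‖x - y‖
      + ∫ z : E3, rho f t z / ‖z - ξ t‖ :=
    integral_nonneg fun _ => integral_nonneg fun _ => add_nonneg
      (div_nonneg (mul_nonneg (hρ _ _) (hρ _ _)) (norm_nonneg _))
      (integral_nonneg fun _ => div_nonneg (hρ _ _) (norm_nonneg _))
  exact add_nonneg (add_nonneg (mul_nonneg (sq_nonneg _) (hf t p.1 p.2)) (by positivity))
    (mul_nonneg (by norm_num) hpot)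

theorem norm_sub_sq_div_two_add_one_le_hEnergy {f : ℝ → E3 → E3 → ℝ}
    (hf : ∀ t x v, 0 ≤ f t x v) (ξ η : ℝ → E3) (t : ℝ) (x v : E3) :
    ‖v - η t‖ ^ 2 / 2 + 1 ≤ hEnergy f ξ η t x v := by
  have hmass : 0 ≤ (mass f 0)⁻¹ := inv_nonneg.mpr (integral_nonneg fun p => hf 0 p.1 p.2)
  have henergy := energy_nonneg hf ξ η 0
  have hpot : 0 ≤ ‖x - ξ t‖⁻¹ := by positivity
  unfold hEnergy
  linarith

theorem hasDerivAt_hEnergy_along {f : ℝ → E3 → E3 → ℝ} {ξ η x v : ℝ → E3} {a b : E3} {t : ℝ}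
    (hx : HasDerivAt x (v t) t) (hv : HasDerivAt v (a + Fpt ξ t (x t)) t)
    (hξ : HasDerivAt ξ (η t) t) (hη : HasDerivAt η b t) (hne : x t ≠ ξ t) :
    HasDerivAt (fun τ => hEnergy f ξ η τ (x τ) (v τ)) ⟪v t - η t, a - b⟫ t := by
  have hkin := (hv.sub hη).norm_sq
  have hpot := (hx.sub hξ).inv_norm (sub_ne_zero.mpr hne)
  have hsum := ((hkin.div_const 2).add hpot).add_const (energy f ξ η 0 + (mass f 0)⁻¹ + 1)
  have hfun : (fun τ => hEnergy f ξ η τ (x τ) (v τ)) = fun τ =>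
      ‖v τ - η τ‖ ^ 2 / 2 + ‖x τ - ξ τ‖⁻¹ + (energy f ξ η 0 + (mass f 0)⁻¹ + 1) := by
    funext τ
    simp only [hEnergy]
    ring
  rw [hfun]
  refine hsum.congr_deriv ?_
  simp only [Pi.sub_apply, Fpt, inner_sub_right, inner_add_right]
  ring

theorem deriv_sqrt_le_norm_of_hasDerivAt_inner {F : Type*} [NormedAddCommGroup F]
    [InnerProductSpace ℝ F] {g : ℝ → ℝ} {w c : F} {t : ℝ} (hg : HasDerivAt g ⟪w, c⟫ t)
    (hpos : 0 < g t) (hw : ‖w‖ ^ 2 ≤ 2 * g t) :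
    deriv (fun τ => √(g τ)) t ≤ ‖c‖ := by
  rw [(hg.sqrt hpos.ne').deriv]
  have hs : 0 < √(g t) := Real.sqrt_pos.mpr hpos
  have hss : √(g t) ^ 2 = g t := Real.sq_sqrt hpos.le
  have hws : ‖w‖ ≤ 2 * √(g t) := by nlinarith [norm_nonneg w]
  rw [div_le_iff₀ (by positivity)]
  calc ⟪w, c⟫ ≤ ‖w‖ * ‖c‖ := real_inner_le_norm w c
    _ ≤ 2 * √(g t) * ‖c‖ := by gcongr
    _ = ‖c‖ * (2 * √(g t)) := by ring

/-- Variation of the microscopic energy along plasma trajectories. -/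
theorem statement_9 (T : ℝ) (S : VPClassicalSolution T)
    (x v : ℝ → E3)
    (hx : ∀ t ∈ Icc (0 : ℝ) T, HasDerivAt x (v t) t)
    (hv : ∀ t ∈ Icc (0 : ℝ) T,
      HasDerivAt v (Efield S.f t (x t) + Fpt S.ξ t (x t)) t)
    (hne : ∀ t ∈ Icc (0 : ℝ) T, x t ≠ S.ξ t) :
    ∀ t ∈ Icc (0 : ℝ) T,
      deriv (fun τ : ℝ => Real.sqrt (hEnergy S.f S.ξ S.η τ (x τ) (v τ))) t
        ≤ ‖Efield S.f t (x t)‖ + ‖Efield S.f t (S.ξ t)‖ := by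
  intro t ht
  have hlower := norm_sub_sq_div_two_add_one_le_hEnergy S.f_nonneg S.ξ S.η t (x t) (v t)
  have hdiff := hasDerivAt_hEnergy_along (f := S.f) (hx t ht) (hv t ht) (S.ξ_ode t)
    (S.η_ode t ht) (hne t ht)
  have hkin := sq_nonneg ‖v t - S.η t‖
  calc _ ≤ ‖Efield S.f t (x t) - Efield S.f t (S.ξ t)‖ :=
        deriv_sqrt_le_norm_of_hasDerivAt_inner hdiff (by linarith) (by linarith)
    _ ≤ _ := norm_sub_le _ _

end
end
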